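/- arXiv:1302.2167 — 4 statements merged into one kernel-verified Lean document; each statement's English description precedes it below -/
import Mathlib

section
/- Let α > 0, β > 0, γ > 0 and define τ = √(α² + γβ²). The function e : [0,∞) → ℝ given by e(d) = (Λ(d)·τ − α)/γ, where Λ(d) = (e^{2dτ}ρ + 1)/(e^{2dτ}ρ − 1) and ρ = (γ·(β²/(2α)) + τ + α)/(γ·(β²/(2α)) − τ + α) (assuming the denominator of ρ is positive), satisfies the Riccati differential equation e'(d) = −2α·e(d) − γ·e(d)² + β² with initial condition e(0) = β²/(2α). -/
/-!
With `Λ := (u + 1) / (u - 1)` for `u = ρ e^{2τd}` one has the hyperbolic-cotangent equation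
`Λ' = -τ (Λ² - 1)`. Completing the square, `-2αe - γe² + β² = (τ² - (γe + α)²) / γ` once
`τ² = α² + γβ²`, so `e = (τΛ - α) / γ` solves the Riccati equation. The constant `ρ` makes
`Λ(0) = (γ e(0) + α) / τ` (the map `x ↦ (x + 1) / (x - 1)` is an involution), and `ρ > 1`
keeps `u` away from `1` for `d ≥ 0`.
-/

open Real

theorem HasDerivAt.add_one_div_sub_one {u : ℝ → ℝ} {τ x : ℝ}
    (hu : HasDerivAt u (2 * τ * u x) x) (hx : u x ≠ 1) :
    HasDerivAt (fun y => (u y + 1) / (u y - 1))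
      (-τ * (((u x + 1) / (u x - 1)) ^ 2 - 1)) x := by
  have hx' : u x - 1 ≠ 0 := sub_ne_zero.2 hx
  refine ((hu.add_const 1).div (hu.sub_const 1) hx').congr_deriv ?_
  field_simp
  ring

theorem HasDerivAt.riccati_of_coth {Λ : ℝ → ℝ} {α β γ τ d : ℝ} (hγ : γ ≠ 0)
    (hτ : τ ^ 2 = α ^ 2 + γ * β ^ 2) (hΛ : HasDerivAt Λ (-τ * (Λ d ^ 2 - 1)) d) :
    HasDerivAt (fun x => (Λ x * τ - α) / γ)
      (-2 * α * ((Λ d * τ - α) / γ) - γ * ((Λ d * τ - α) / γ) ^ 2 + β ^ 2) d := by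
  refine ((hΛ.mul_const τ).sub_const α).div_const γ |>.congr_deriv ?_
  field_simp
  linear_combination hτ

theorem add_one_div_sub_one_of_add_div_sub {P τ : ℝ} (hP : P - τ ≠ 0) :
    ((P + τ) / (P - τ) + 1) / ((P + τ) / (P - τ) - 1) = P / τ := by
  rw [div_add_one hP, div_sub_one hP, div_div_div_cancel_right₀ hP]
  ring_nf

theorem ou_riccati_solution_general (α β γ : ℝ) (hα : 0 < α) (hγ : 0 < γ)
    (τ : ℝ) (hτ : τ = Real.sqrt (α ^ 2 + γ * β ^ 2))
    (ρ : ℝ) (hρ : ρ = (γ * (β ^ 2 / (2 * α)) + τ + α) / (γ * (β ^ 2 / (2 * α)) - τ + α))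
    (hden : 0 < γ * (β ^ 2 / (2 * α)) - τ + α)
    (e : ℝ → ℝ)
    (he : ∀ d, e d = ((Real.exp (2 * d * τ) * ρ + 1) / (Real.exp (2 * d * τ) * ρ - 1) * τ - α) / γ) :
    e 0 = β ^ 2 / (2 * α) ∧
      ∀ d : ℝ, 0 ≤ d → HasDerivAt e (-2 * α * e d - γ * (e d) ^ 2 + β ^ 2) d := by
  have hτ_pos : 0 < τ := hτ ▸ sqrt_pos.2 (by positivity)
  have hτ_sq : τ ^ 2 = α ^ 2 + γ * β ^ 2 := hτ ▸ sq_sqrt (by positivity)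
  have hρ_gt : 1 < ρ := hρ ▸ (one_lt_div hden).2 (by linarith)
  refine ⟨?_, fun d hd => ?_⟩
  · rw [he, mul_zero, zero_mul, exp_zero, one_mul, hρ, add_right_comm, sub_add_eq_add_sub,
      add_one_div_sub_one_of_add_div_sub (by linarith)]
    field_simp
    ring
  · have hu : HasDerivAt (fun x => exp (2 * x * τ) * ρ) (2 * τ * (exp (2 * d * τ) * ρ)) d :=
      (((hasDerivAt_id' d).const_mul 2).mul_const τ).exp.mul_const ρ |>.congr_deriv (by ring)
    have hu_ne : exp (2 * d * τ) * ρ ≠ 1 :=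
      (one_lt_mul_of_le_of_lt (one_le_exp (by positivity)) hρ_gt).ne'
    rw [funext he]
    exact (hu.add_one_div_sub_one hu_ne).riccati_of_coth hγ.ne' hτ_sq

/-- Closed-form solution of the Kalman–Bucy Riccati ODE for the
Ornstein–Uhlenbeck process with parameter `α`, diffusion `β`, SNR `γ`. -/
theorem ou_riccati_solution (α β γ : ℝ) (hα : 0 < α) (hβ : 0 < β) (hγ : 0 < γ)
    (τ : ℝ) (hτ : τ = Real.sqrt (α ^ 2 + γ * β ^ 2))
    (ρ : ℝ) (hρ : ρ = (γ * (β ^ 2 / (2 * α)) + τ + α) / (γ * (β ^ 2 / (2 * α)) - τ + α))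
    (hden : 0 < γ * (β ^ 2 / (2 * α)) - τ + α)
    (e : ℝ → ℝ)
    (he : ∀ d, e d = ((Real.exp (2 * d * τ) * ρ + 1) / (Real.exp (2 * d * τ) * ρ - 1) * τ - α) / γ) :
    e 0 = β ^ 2 / (2 * α) ∧
      ∀ d : ℝ, 0 ≤ d → HasDerivAt e (-2 * α * e d - γ * (e d) ^ 2 + β ^ 2) d :=
  ou_riccati_solution_general α β γ hα hγ τ hτ ρ hρ hden e he
end

section
/- Let α > 0, γ > 0, set τ = √(α² + γ), cmmse(γ) = (τ − α)/γ and mmse(γ) = 1/(2τ). Define lmmse(d,γ) = (1 − e^{−2dτ})·mmse(γ) + e^{−2dτ}·cmmse(γ) for d ≥ 0. Then (lmmse(d,γ) − mmse(γ))/(cmmse(γ) − mmse(γ)) = e^{−d/mmse(γ)} for all d ≥ 0. -/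
open Real

/-
The lookahead error is the convex combination `(1 - t) * mmse + t * cmmse` with
`t = exp (-2 d τ) = exp (-d / mmse)`, so the normalized gap is exactly `t`, as soon as
`cmmse ≠ mmse`. Using `τ² = α² + γ`, the gap is `cmmse - mmse = (τ - α)² / (2 τ γ)`,
which is positive because `τ = √(α² + γ) > |α|` when `γ > 0`.
-/

theorem lt_sqrt_sq_add {α γ : ℝ} (hγ : 0 < γ) : α < √(α ^ 2 + γ) :=
  calc α ≤ |α| := le_abs_self α
    _ = √(α ^ 2) := (sqrt_sq_eq_abs α).symm
    _ < √(α ^ 2 + γ) := sqrt_lt_sqrt (sq_nonneg α) (lt_add_of_pos_right _ hγ)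

theorem div_sub_one_div_two_mul_eq {α γ τ : ℝ} (hτsq : τ ^ 2 = α ^ 2 + γ) (hγ : γ ≠ 0)
    (hτ : τ ≠ 0) : (τ - α) / γ - 1 / (2 * τ) = (τ - α) ^ 2 / (2 * τ * γ) := by
  field_simp
  linear_combination hτsq

theorem convex_comb_sub_div_sub {m c : ℝ} (t : ℝ) (h : c ≠ m) :
    ((1 - t) * m + t * c - m) / (c - m) = t := by
  rw [show (1 - t) * m + t * c - m = t * (c - m) by ring]
  exact mul_div_cancel_right₀ t (sub_ne_zero.mpr h)

theorem ou_lmmse_exponential_decay_general (α γ : ℝ) (hγ : 0 < γ)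
    (τ cmmse mmse : ℝ)
    (hτ : τ = Real.sqrt (α ^ 2 + γ))
    (hc : cmmse = (τ - α) / γ) (hm : mmse = 1 / (2 * τ))
    (lmmse : ℝ → ℝ)
    (hl : ∀ d, lmmse d = (1 - Real.exp (-2 * d * τ)) * mmse + Real.exp (-2 * d * τ) * cmmse) :
    ∀ d : ℝ, 0 ≤ d →
      (lmmse d - mmse) / (cmmse - mmse) = Real.exp (-d / mmse) := by
  have hατ : α < τ := hτ ▸ lt_sqrt_sq_add hγ
  have hτpos : 0 < τ := hτ ▸ sqrt_pos.mpr (by positivity)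
  have hτsq : τ ^ 2 = α ^ 2 + γ := hτ ▸ sq_sqrt (by positivity)
  have hgap : cmmse ≠ mmse := by
    rw [← sub_ne_zero, hc, hm, div_sub_one_div_two_mul_eq hτsq hγ.ne' hτpos.ne']
    exact (div_pos (pow_pos (sub_pos.mpr hατ) 2) (by positivity)).ne'
  intro d _
  rw [hl d, convex_comb_sub_div_sub _ hgap, hm]
  congr 1
  rw [one_div, div_inv_eq_mul]; ring

/-- Exponential convergence of the finite-lookahead MMSE of the OU process:
the normalized gap decays as `exp (-d / mmse γ)`. -/
theorem ou_lmmse_exponential_decay (α γ : ℝ) (hα : 0 < α) (hγ : 0 < γ)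
    (τ cmmse mmse : ℝ)
    (hτ : τ = Real.sqrt (α ^ 2 + γ))
    (hc : cmmse = (τ - α) / γ) (hm : mmse = 1 / (2 * τ))
    (lmmse : ℝ → ℝ)
    (hl : ∀ d, lmmse d = (1 - Real.exp (-2 * d * τ)) * mmse + Real.exp (-2 * d * τ) * cmmse) :
    ∀ d : ℝ, 0 ≤ d →
      (lmmse d - mmse) / (cmmse - mmse) = Real.exp (-d / mmse) :=
  ou_lmmse_exponential_decay_general α γ hγ τ cmmse mmse hτ hc hm lmmse hl
end

section
/- Let α > 0, γ > 0, τ = √(α² + γ), cmmse = (τ − α)/γ, mmse = 1/(2τ). For d ≥ 0 define lmmse(d) = (1 − e^{−2dτ})·mmse + e^{−2dτ}·cmmse and for d < 0 define lmmse(d) = e^{−2α|d|}·cmmse + (1/(2α))(1 − e^{−2α|d|}). Then lmmse is continuous and monotonically non-increasing on ℝ, with lim_{d→∞} lmmse(d) = mmse and lim_{d→−∞} lmmse(d) = 1/(2α). -/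
open Real Filter

/-- Shape of the lookahead-MMSE curve for the OU process: continuous,
non-increasing, with asymptotes `mmse` at `+∞` and the stationary variance
`1/(2α)` at `-∞`. -/
theorem ou_lmmse_shape (α γ : ℝ) (hα : 0 < α) (hγ : 0 < γ)
    (τ cmmse mmse : ℝ)
    (hτ : τ = Real.sqrt (α ^ 2 + γ))
    (hc : cmmse = (τ - α) / γ) (hm : mmse = 1 / (2 * τ))
    (lmmse : ℝ → ℝ)
    (hpos : ∀ d : ℝ, 0 ≤ d →
      lmmse d = (1 - Real.exp (-2 * d * τ)) * mmse + Real.exp (-2 * d * τ) * cmmse)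
    (hneg : ∀ d : ℝ, d < 0 →
      lmmse d = Real.exp (-2 * α * |d|) * cmmse + (1 / (2 * α)) * (1 - Real.exp (-2 * α * |d|))) :
    Continuous lmmse ∧ Antitone lmmse ∧
      Tendsto lmmse atTop (nhds mmse) ∧ Tendsto lmmse atBot (nhds (1 / (2 * α))) := by
  have hτsq : τ ^ 2 = α ^ 2 + γ := by
    rw [hτ]; exact Real.sq_sqrt (by positivity)
  have hτpos : 0 < τ := by
    rw [hτ]; exact Real.sqrt_pos.mpr (by positivity)
  have hατ : α < τ := by nlinarith
  have hceq : cmmse = 1 / (τ + α) := by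
    rw [hc, div_eq_div_iff hγ.ne' (by positivity : (0:ℝ) < τ + α).ne']; nlinarith
  have hmc : mmse ≤ cmmse := by
    rw [hm, hceq]
    exact one_div_le_one_div_of_le (by positivity) (by linarith)
  have hcv : cmmse ≤ 1 / (2 * α) := by
    rw [hceq]
    exact one_div_le_one_div_of_le (by positivity) (by linarith)
  -- eventual-form functions
  have hnegform : ∀ d : ℝ, d < 0 →
      lmmse d = Real.exp (2 * α * d) * cmmse + (1 / (2 * α)) * (1 - Real.exp (2 * α * d)) := by
    intro d hd
    have habs : -2 * α * |d| = 2 * α * d := by rw [abs_of_neg hd]; ring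
    rw [hneg d hd, habs]
  refine ⟨?_, ?_, ?_, ?_⟩
  · -- Continuity
    have heq : lmmse = fun d : ℝ => if (0:ℝ) ≤ d then
        (1 - Real.exp (-2 * d * τ)) * mmse + Real.exp (-2 * d * τ) * cmmse
      else Real.exp (2 * α * d) * cmmse + (1 / (2 * α)) * (1 - Real.exp (2 * α * d)) := by
      funext d
      by_cases hd : (0:ℝ) ≤ d
      · rw [if_pos hd, hpos d hd]
      · rw [if_neg hd, hnegform d (lt_of_not_ge hd)]
    rw [heq]
    apply Continuous.if_le
    · fun_prop
    · fun_prop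
    · exact continuous_const
    · exact continuous_id
    · intro x hx
      simp [← hx]
  · -- Antitone
    intro a b hab
    by_cases ha : (0:ℝ) ≤ a
    · have hb : (0:ℝ) ≤ b := le_trans ha hab
      rw [hpos a ha, hpos b hb]
      have he : Real.exp (-2 * b * τ) ≤ Real.exp (-2 * a * τ) :=
        Real.exp_le_exp.mpr (by nlinarith)
      nlinarith [mul_nonneg (sub_nonneg.mpr he) (sub_nonneg.mpr hmc)]
    · have ha' : a < 0 := lt_of_not_ge ha
      by_cases hb : (0:ℝ) ≤ b
      · rw [hpos b hb, hnegform a ha']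
        have he1 : Real.exp (-2 * b * τ) ≤ 1 := Real.exp_le_one_iff.mpr (by nlinarith)
        have he2 : Real.exp (2 * α * a) ≤ 1 := Real.exp_le_one_iff.mpr (by nlinarith)
        have h1 : (1 - Real.exp (-2 * b * τ)) * mmse + Real.exp (-2 * b * τ) * cmmse ≤ cmmse := by
          nlinarith [mul_nonneg (sub_nonneg.mpr he1) (sub_nonneg.mpr hmc)]
        have h2 : cmmse ≤ Real.exp (2 * α * a) * cmmse
            + (1 / (2 * α)) * (1 - Real.exp (2 * α * a)) := by
          nlinarith [mul_nonneg (sub_nonneg.mpr he2) (sub_nonneg.mpr hcv)]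
        linarith
      · have hb' : b < 0 := lt_of_not_ge hb
        rw [hnegform a ha', hnegform b hb']
        have he : Real.exp (2 * α * a) ≤ Real.exp (2 * α * b) :=
          Real.exp_le_exp.mpr (by nlinarith)
        nlinarith [mul_nonneg (sub_nonneg.mpr he) (sub_nonneg.mpr hcv)]
  · -- atTop
    have h1 : Tendsto (fun d : ℝ => -2 * d * τ) atTop atBot := by
      have h : Tendsto (fun d : ℝ => (-(2 * τ)) * d) atTop atBot :=
        Tendsto.const_mul_atTop_of_neg (by linarith) tendsto_id
      convert h using 2 with d
      ring
    have hE : Tendsto (fun d : ℝ => Real.exp (-2 * d * τ)) atTop (nhds 0) :=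
      Real.tendsto_exp_atBot.comp h1
    have h2 : Tendsto (fun d : ℝ =>
        (1 - Real.exp (-2 * d * τ)) * mmse + Real.exp (-2 * d * τ) * cmmse)
        atTop (nhds mmse) := by
      have h := (((tendsto_const_nhds (x := (1:ℝ))).sub hE).mul (tendsto_const_nhds (x := mmse))).add
        (hE.mul (tendsto_const_nhds (x := cmmse)))
      simpa using h
    refine h2.congr' ?_
    filter_upwards [eventually_ge_atTop (0:ℝ)] with d hd
    exact (hpos d hd).symm
  · -- atBot
    have h1 : Tendsto (fun d : ℝ => 2 * α * d) atBot atBot := by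
      exact Tendsto.const_mul_atBot (by linarith) tendsto_id
    have hE : Tendsto (fun d : ℝ => Real.exp (2 * α * d)) atBot (nhds 0) :=
      Real.tendsto_exp_atBot.comp h1
    have h2 : Tendsto (fun d : ℝ =>
        Real.exp (2 * α * d) * cmmse + (1 / (2 * α)) * (1 - Real.exp (2 * α * d)))
        atBot (nhds (1 / (2 * α))) := by
      have h := (hE.mul (tendsto_const_nhds (x := cmmse))).add
        ((tendsto_const_nhds (x := 1 / (2 * α))).mul ((tendsto_const_nhds (x := (1:ℝ))).sub hE))
      simpa using h
    refine h2.congr' ?_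
    filter_upwards [eventually_lt_atBot (0:ℝ)] with d hd
    exact (hnegform d hd).symm
end

section
/- Let α > 0 and d < 0. For the Ornstein–Uhlenbeck process with parameter α and β = 1, the prediction error lmmse(d, γ) = e^{2αd}·(√(α² + γ) − α)/γ + (1/(2α))(1 − e^{2αd}) is a strictly decreasing function of γ on (0, ∞), and lim_{γ→∞} lmmse(d, γ) = (1/(2α))(1 − e^{2αd}). -/
open Real Filter

lemma ou_aux (α : ℝ) (hα : 0 < α) {γ : ℝ} (hγ : 0 < γ) :
    (Real.sqrt (α ^ 2 + γ) - α) / γ = (Real.sqrt (α ^ 2 + γ) + α)⁻¹ := by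
  have h0 : 0 ≤ α ^ 2 + γ := by positivity
  have hs : Real.sqrt (α ^ 2 + γ) ^ 2 = α ^ 2 + γ := Real.sq_sqrt h0
  have hpos : 0 < Real.sqrt (α ^ 2 + γ) + α := by
    have := Real.sqrt_nonneg (α ^ 2 + γ); linarith
  field_simp
  nlinarith [hs]

/-- Prediction error (negative lookahead `d < 0`) of the OU process is strictly
decreasing in the SNR `γ`, with infinite-SNR floor `(1/(2α))(1 - e^{2αd})`. -/
theorem ou_prediction_error_in_snr (α d : ℝ) (hα : 0 < α) (hd : d < 0)
    (lmmse : ℝ → ℝ)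
    (hl : ∀ γ, lmmse γ =
      Real.exp (2 * α * d) * ((Real.sqrt (α ^ 2 + γ) - α) / γ) +
        (1 / (2 * α)) * (1 - Real.exp (2 * α * d))) :
    StrictAntiOn lmmse (Set.Ioi 0) ∧
      Tendsto lmmse atTop (nhds ((1 / (2 * α)) * (1 - Real.exp (2 * α * d)))) := by
  have hexp : 0 < Real.exp (2 * α * d) := Real.exp_pos _
  constructor
  · intro x hx y hy hxy
    rw [hl x, hl y, ou_aux α hα hx, ou_aux α hα hy]
    have hx0 : (0:ℝ) < x := hx
    have hy0 : (0:ℝ) < y := hy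
    have hsx : 0 < Real.sqrt (α ^ 2 + x) + α := by
      have := Real.sqrt_nonneg (α ^ 2 + x); linarith
    have hlt : Real.sqrt (α ^ 2 + x) + α < Real.sqrt (α ^ 2 + y) + α := by
      have : Real.sqrt (α ^ 2 + x) < Real.sqrt (α ^ 2 + y) := by
        apply Real.sqrt_lt_sqrt (by positivity) (by linarith)
      linarith
    have : (Real.sqrt (α ^ 2 + y) + α)⁻¹ < (Real.sqrt (α ^ 2 + x) + α)⁻¹ :=
      inv_strictAnti₀ hsx hlt
    nlinarith
  · have h1 : Tendsto (fun γ : ℝ => (Real.sqrt (α ^ 2 + γ) + α)⁻¹) atTop (nhds 0) := by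
      apply Tendsto.inv_tendsto_atTop
      apply Filter.tendsto_atTop_add_const_right
      have hm : Tendsto Real.sqrt atTop atTop := by
        apply tendsto_atTop_atTop_of_monotone (fun a b h => Real.sqrt_le_sqrt h)
        intro b
        exact ⟨(max b 0) ^ 2, by rw [Real.sqrt_sq (le_max_right b 0)]; exact le_max_left b 0⟩
      exact hm.comp (tendsto_atTop_add_const_left atTop (α ^ 2) tendsto_id)
    have h2 : Tendsto lmmse atTop
        (nhds (Real.exp (2 * α * d) * 0 + (1 / (2 * α)) * (1 - Real.exp (2 * α * d)))) := by
      apply Tendsto.congr' ?_ (((h1.const_mul _).add_const _))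
      filter_upwards [eventually_gt_atTop 0] with γ hγ
      rw [hl γ, ou_aux α hα hγ]
    simpa using h2
end
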